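/- arXiv:1403.7999 — 2 statements merged into one kernel-verified Lean document; each statement's English description precedes it below -/
import Mathlib

section
/- Let α ∈ (0,1], c, τ > 0, and define η_n = c n^{-α} for n ≥ 1. Let (s_n) be a sequence of nonnegative reals satisfying s_{n+1} ≤ (1 - η_n) s_n + τ η_n² for all n ≥ 1. Let n₀ > 1 be the smallest integer such that η_n ≤ 1 for all n ≥ n₀, and set t = 1 - 2^{α-1}. Then for α = 1 and every n ≥ 2n₀, s_{n+1} ≤ s_{n₀}(n₀/(n+1))^c + (τ c²/(n+1)^c)(1 + 1/n₀)^c · φ_{c-1}(n), where φ_γ(x) = (x^γ - 1)/γ if γ ≠ 0 and φ_0(x) = log x. -/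
/-!
Unrolling the recursion from `n₀` gives
`s (n+1) ≤ s n₀ ∏_{j=n₀}^{n} (1 - c/j) + τ ∑_{k=n₀}^{n} (c/k)² ∏_{j=k+1}^{n} (1 - c/j)`.
Since `1 - c/j ≤ (j/(j+1))^c`, the products telescope to `((k+1)/(n+1))^c`, and the noise sum
reduces to `∑ k^(c-2)`, which is compared with `∫ x^(c-2) = φ_{c-1}`. For `c ≤ 2` the summand
decreases and the comparison gives `φ_{c-1}(n)` directly. For `c ≥ 2` it increases and the
comparison costs an extra `n^(c-2)`; this is paid for by the sharper Bernoulli bound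
`1 - c/j ≤ ((j-1)/j)^c` on the products together with the slack in `(1 + 1/n₀)^c`, which is where
`n ≥ 2 n₀` and `c ≤ n₀` (that is, `η n₀ ≤ 1`) enter.
-/

noncomputable def chungPhi (c : ℝ) (x : ℝ) : ℝ :=
  if c = 0 then Real.log x else (x ^ c - 1) / c

open Finset Real

theorem le_mul_prod_add_sum_of_le_mul_add {r b s : ℕ → ℝ} {a : ℕ}
    (hr : ∀ k, a ≤ k → 0 ≤ r k) (hs : ∀ k, a ≤ k → s (k + 1) ≤ r k * s k + b k)
    {n : ℕ} (hn : a ≤ n) :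
    s n ≤ s a * ∏ j ∈ Ico a n, r j + ∑ k ∈ Ico a n, b k * ∏ j ∈ Ico (k + 1) n, r j := by
  induction n, hn using Nat.le_induction with
  | base => simp
  | succ n hn ih =>
    have hsum : ∑ k ∈ Ico a n, b k * ∏ j ∈ Ico (k + 1) (n + 1), r j
        = (∑ k ∈ Ico a n, b k * ∏ j ∈ Ico (k + 1) n, r j) * r n := by
      rw [sum_mul]
      refine sum_congr rfl fun k hk => ?_
      rw [prod_Ico_succ_top (by simpa using (mem_Ico.mp hk).2), mul_assoc]
    calc s (n + 1) ≤ r n * s n + b n := hs n hn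
      _ ≤ r n * (s a * ∏ j ∈ Ico a n, r j + ∑ k ∈ Ico a n, b k * ∏ j ∈ Ico (k + 1) n, r j)
          + b n := by gcongr; exact hr n hn
      _ = _ := by
        rw [prod_Ico_succ_top hn, sum_Ico_succ_top hn, hsum, Ico_self, prod_empty]
        ring

theorem prod_Ico_le_rpow_div {u g : ℕ → ℝ} {c : ℝ} {a b : ℕ} (hab : a ≤ b)
    (hg : ∀ j, a ≤ j → 0 < g j) (hu0 : ∀ j, a ≤ j → 0 ≤ u j)
    (hu : ∀ j, a ≤ j → u j ≤ (g j / g (j + 1)) ^ c) :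
    ∏ j ∈ Ico a b, u j ≤ (g a / g b) ^ c := by
  induction b, hab using Nat.le_induction with
  | base => simp [div_self (hg a le_rfl).ne']
  | succ b hab ih =>
    have ha := hg a le_rfl
    have hb := hg b hab
    have hb1 := hg (b + 1) (by omega)
    calc ∏ j ∈ Ico a (b + 1), u j = (∏ j ∈ Ico a b, u j) * u b := prod_Ico_succ_top hab u
      _ ≤ (g a / g b) ^ c * (g b / g (b + 1)) ^ c :=
        mul_le_mul ih (hu b hab) (hu0 b hab) (by positivity)
      _ = (g a / g (b + 1)) ^ c := by
        rw [← mul_rpow (by positivity) (by positivity)]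
        congr 1
        field_simp

theorem one_sub_div_le_div_add_one_rpow {c x : ℝ} (hc : 0 ≤ c) (hx : 0 < x) :
    1 - c / x ≤ (x / (x + 1)) ^ c := by
  have hpos : 0 < x / (x + 1) := by positivity
  have hlog : -(1 / x) ≤ log (x / (x + 1)) := by
    have h := one_sub_inv_le_log_of_pos hpos
    rwa [inv_div, show 1 - (x + 1) / x = -(1 / x) by field_simp; ring] at h
  calc 1 - c / x = -(1 / x) * c + 1 := by ring
    _ ≤ log (x / (x + 1)) * c + 1 := by gcongr
    _ ≤ (x / (x + 1)) ^ c := by rw [rpow_def_of_pos hpos]; exact add_one_le_exp _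

theorem one_sub_div_le_sub_one_div_rpow {c x : ℝ} (hc : 1 ≤ c) (hx : 1 ≤ x) :
    1 - c / x ≤ ((x - 1) / x) ^ c := by
  have hx0 : 0 < x := by linarith
  have h := one_add_mul_self_le_rpow_one_add (s := -(1 / x))
    (by rw [neg_le_neg_iff]; exact div_le_one_of_le₀ hx hx0.le) hc
  rwa [show 1 + -(1 / x) = (x - 1) / x by field_simp; ring,
    show 1 + c * -(1 / x) = 1 - c / x by ring] at h

theorem prod_one_sub_div_le_div_rpow {c : ℝ} {a b : ℕ} (hc : 0 ≤ c) (hca : c ≤ a) (ha : 1 ≤ a)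
    (hab : a ≤ b) : ∏ j ∈ Ico a b, (1 - c / j) ≤ ((a : ℝ) / b) ^ c := by
  have hj : ∀ j : ℕ, a ≤ j → (1 : ℝ) ≤ j ∧ c ≤ j := fun j hj =>
    ⟨by exact_mod_cast ha.trans hj, hca.trans (by exact_mod_cast hj)⟩
  refine prod_Ico_le_rpow_div (g := fun j : ℕ => (j : ℝ)) hab (fun j h => ?_) (fun j h => ?_)
    (fun j h => ?_)
  · linarith [(hj j h).1]
  · rw [sub_nonneg, div_le_one (by linarith [(hj j h).1])]
    exact (hj j h).2
  · push_cast
    exact one_sub_div_le_div_add_one_rpow hc (by linarith [(hj j h).1])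

theorem prod_Ico_succ_one_sub_div_le_div_rpow {c : ℝ} {a b : ℕ} (hc : 1 ≤ c) (hca : c ≤ a + 1)
    (ha : 1 ≤ a) (hab : a ≤ b) :
    ∏ j ∈ Ico (a + 1) (b + 1), (1 - c / j) ≤ ((a : ℝ) / b) ^ c := by
  have hj : ∀ j : ℕ, a + 1 ≤ j → (2 : ℝ) ≤ j ∧ c ≤ j := fun j hj =>
    ⟨by exact_mod_cast (show 2 ≤ j by omega), hca.trans (by exact_mod_cast hj)⟩
  have h := prod_Ico_le_rpow_div (u := fun j : ℕ => 1 - c / j) (g := fun j : ℕ => (j : ℝ) - 1)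
    (c := c) (show a + 1 ≤ b + 1 by omega) (fun j h => ?_) (fun j h => ?_) (fun j h => ?_)
  · simpa using h
  · linarith [(hj j h).1]
  · rw [sub_nonneg, div_le_one (by linarith [(hj j h).1])]
    exact (hj j h).2
  · push_cast
    rw [add_sub_cancel_right]
    exact one_sub_div_le_sub_one_div_rpow hc (by linarith [(hj j h).1])

theorem chungPhi_sub_chungPhi_eq_integral (γ : ℝ) {a b : ℝ} (ha : 0 < a) (hb : 0 < b) :
    chungPhi γ b - chungPhi γ a = ∫ x in a..b, x ^ (γ - 1) := by
  unfold chungPhi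
  split_ifs with hγ
  · simp_rw [hγ, zero_sub, rpow_neg_one]
    rw [integral_inv_of_pos ha hb, log_div hb.ne' ha.ne']
  · rw [integral_rpow (Or.inr ⟨by contrapose! hγ; linarith, Set.notMem_uIcc_of_lt ha hb⟩),
      sub_add_cancel]
    ring

theorem chungPhi_nonneg (γ : ℝ) {x : ℝ} (hx : 1 ≤ x) : 0 ≤ chungPhi γ x := by
  have h := chungPhi_sub_chungPhi_eq_integral γ one_pos (one_pos.trans_le hx)
  rw [show chungPhi γ 1 = 0 by simp [chungPhi], sub_zero] at h
  rw [h]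
  exact intervalIntegral.integral_nonneg hx fun t ht => rpow_nonneg (by linarith [ht.1]) _

theorem sum_Ico_rpow_le_chungPhi_of_le_one {γ : ℝ} (hγ : γ ≤ 1) {a b : ℕ} (ha : 2 ≤ a)
    (hab : a ≤ b) : ∑ k ∈ Ico a (b + 1), (k : ℝ) ^ (γ - 1) ≤ chungPhi γ b := by
  obtain ⟨a, rfl⟩ : ∃ a', a = a' + 1 := ⟨a - 1, by omega⟩
  replace ha : 1 ≤ a := by omega
  replace hab : a ≤ b := by omega
  have ha' : (1 : ℝ) ≤ a := by exact_mod_cast ha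
  have hab' : (a : ℝ) ≤ b := by exact_mod_cast hab
  have hanti : AntitoneOn (fun x : ℝ => x ^ (γ - 1)) (Set.Icc (a : ℝ) b) :=
    (antitoneOn_rpow_Ioi_of_exponent_nonpos (by linarith)).mono fun x hx =>
      Set.mem_Ioi.mpr (by linarith [hx.1])
  have h := hanti.sum_le_integral_Ico hab
  rw [← chungPhi_sub_chungPhi_eq_integral γ (by linarith) (by linarith)] at h
  rw [← sum_Ico_add' (fun k : ℕ => (k : ℝ) ^ (γ - 1)) a b 1]
  linarith [chungPhi_nonneg γ ha']

theorem sum_Ico_rpow_le_chungPhi_of_one_le {γ : ℝ} (hγ : 1 ≤ γ) {a b : ℕ} (ha : 1 ≤ a)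
    (hab : a ≤ b) :
    ∑ k ∈ Ico a (b + 1), (k : ℝ) ^ (γ - 1) ≤ (b : ℝ) ^ (γ - 1) + chungPhi γ b := by
  have ha' : (1 : ℝ) ≤ a := by exact_mod_cast ha
  have hab' : (a : ℝ) ≤ b := by exact_mod_cast hab
  have hmono : MonotoneOn (fun x : ℝ => x ^ (γ - 1)) (Set.Icc (a : ℝ) b) :=
    (monotoneOn_rpow_Ici_of_exponent_nonneg (by linarith)).mono fun x hx =>
      Set.mem_Ici.mpr (by linarith [hx.1])
  have h := hmono.sum_le_integral_Ico hab
  rw [← chungPhi_sub_chungPhi_eq_integral γ (by linarith) (by linarith)] at h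
  rw [sum_Ico_succ_top hab]
  linarith [chungPhi_nonneg γ ha']

theorem rpow_sub_one_sub_one_add_chungPhi_le {c x₀ x : ℝ} (hc : 2 ≤ c) (hcx₀ : c ≤ x₀)
    (hx : 2 * x₀ ≤ x) :
    x ^ (c - 1 - 1) + chungPhi (c - 1) x
      ≤ ((1 + 1 / x₀) * (x / (x + 1))) ^ c * chungPhi (c - 1) x := by
  have hx₀ : 0 < x₀ := by linarith
  have hx0 : 0 < x := by linarith
  set A := x ^ (c - 1 - 1) with hA
  set K := (1 + 1 / x₀) * (x / (x + 1)) with hK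
  have hA1 : 1 ≤ A := one_le_rpow (by linarith) (by linarith)
  have hφ : chungPhi (c - 1) x = (A * x - 1) / (c - 1) := by
    rw [chungPhi, if_neg (by linarith), hA, ← rpow_add_one hx0.ne', sub_add_cancel]
  have hK1 : K - 1 = (x - x₀) / (x₀ * (x + 1)) := by
    rw [hK]; field_simp; ring
  have hbernoulli : 1 + c * (K - 1) ≤ K ^ c := by
    have hK1nn : 0 ≤ K - 1 := by rw [hK1]; apply div_nonneg <;> nlinarith
    have h := one_add_mul_self_le_rpow_one_add (s := K - 1) (by linarith) (by linarith : 1 ≤ c)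
    rwa [add_sub_cancel] at h
  have hpoly : (c - 1) * (x₀ * (x + 1)) ≤ c * (x - x₀) * (x - 1) := by
    nlinarith [mul_nonneg (mul_nonneg (by linarith : (0 : ℝ) ≤ c) hx0.le)
      (by linarith : 0 ≤ x - 2 * x₀), mul_nonneg hx0.le (by linarith : 0 ≤ x₀ - c)]
  have hA_le : A ≤ c * (K - 1) * chungPhi (c - 1) x := by
    have hden : 0 < (c - 1) * (x₀ * (x + 1)) := by
      have : 0 < c - 1 := by linarith
      positivity
    rw [hK1, hφ, show c * ((x - x₀) / (x₀ * (x + 1))) * ((A * x - 1) / (c - 1))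
      = c * (x - x₀) * (A * x - 1) / ((c - 1) * (x₀ * (x + 1))) by field_simp,
      le_div_iff₀ hden]
    nlinarith [mul_le_mul_of_nonneg_left hpoly (by linarith : 0 ≤ A),
      mul_le_mul_of_nonneg_left (show A * (x - 1) ≤ A * x - 1 by nlinarith)
        (by nlinarith : 0 ≤ c * (x - x₀))]
  have hφ0 : 0 ≤ chungPhi (c - 1) x := by
    rw [hφ]; apply div_nonneg <;> nlinarith
  nlinarith [mul_le_mul_of_nonneg_right hbernoulli hφ0]

theorem add_one_rpow_div_sq_le {c x₀ x : ℝ} (hc : 0 ≤ c) (hx₀ : 0 < x₀) (hx : x₀ ≤ x) :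
    (x + 1) ^ c / x ^ 2 ≤ (1 + 1 / x₀) ^ c * x ^ (c - 1 - 1) := by
  have hx0 : 0 < x := hx₀.trans_le hx
  calc (x + 1) ^ c / x ^ 2 = (1 + 1 / x) ^ c * x ^ (c - 1 - 1) := by
        rw [show x + 1 = (1 + 1 / x) * x by field_simp, mul_rpow (by positivity) hx0.le,
          rpow_sub_one hx0.ne', rpow_sub_one hx0.ne']
        ring
    _ ≤ (1 + 1 / x₀) ^ c * x ^ (c - 1 - 1) := by gcongr

section NoiseSum

variable {c : ℝ} {n₀ n : ℕ}

theorem sum_sq_mul_prod_one_sub_div_le_of_le_two (hc : 0 ≤ c) (hc2 : c ≤ 2) (hcn₀ : c ≤ n₀)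
    (hn₀ : 2 ≤ n₀) (hn : n₀ ≤ n) :
    ∑ k ∈ Ico n₀ (n + 1), (c / k) ^ 2 * ∏ j ∈ Ico (k + 1) (n + 1), (1 - c / j)
      ≤ c ^ 2 / ((n : ℝ) + 1) ^ c * (1 + 1 / (n₀ : ℝ)) ^ c * chungPhi (c - 1) n := by
  have hn₀' : (0 : ℝ) < n₀ := by positivity
  calc ∑ k ∈ Ico n₀ (n + 1), (c / k) ^ 2 * ∏ j ∈ Ico (k + 1) (n + 1), (1 - c / j)
      ≤ ∑ k ∈ Ico n₀ (n + 1),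
          c ^ 2 / ((n : ℝ) + 1) ^ c * ((1 + 1 / (n₀ : ℝ)) ^ c * (k : ℝ) ^ (c - 1 - 1)) := by
        refine sum_le_sum fun k hk => ?_
        obtain ⟨hk₀, hkn⟩ := mem_Ico.mp hk
        have hk : (n₀ : ℝ) ≤ k := by exact_mod_cast hk₀
        have hprod := prod_one_sub_div_le_div_rpow hc
          (show c ≤ ((k + 1 : ℕ) : ℝ) by push_cast; linarith) (by omega)
          (show k + 1 ≤ n + 1 by omega)
        push_cast at hprod
        calc (c / k) ^ 2 * ∏ j ∈ Ico (k + 1) (n + 1), (1 - c / j)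
            ≤ (c / k) ^ 2 * (((k : ℝ) + 1) / ((n : ℝ) + 1)) ^ c := by gcongr
          _ = c ^ 2 / ((n : ℝ) + 1) ^ c * (((k : ℝ) + 1) ^ c / (k : ℝ) ^ 2) := by
            rw [div_rpow (by positivity) (by positivity)]
            ring
          _ ≤ _ := by gcongr; exact add_one_rpow_div_sq_le hc hn₀' hk
    _ = c ^ 2 / ((n : ℝ) + 1) ^ c * (1 + 1 / (n₀ : ℝ)) ^ c
          * ∑ k ∈ Ico n₀ (n + 1), (k : ℝ) ^ (c - 1 - 1) := by
        rw [mul_sum]; simp only [mul_assoc]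
    _ ≤ _ := by
        gcongr
        exact sum_Ico_rpow_le_chungPhi_of_le_one (by linarith) hn₀ hn

theorem sum_sq_mul_prod_one_sub_div_le_of_two_le (hc2 : 2 ≤ c) (hcn₀ : c ≤ n₀)
    (hn₀ : 2 ≤ n₀) (hn : 2 * n₀ ≤ n) :
    ∑ k ∈ Ico n₀ (n + 1), (c / k) ^ 2 * ∏ j ∈ Ico (k + 1) (n + 1), (1 - c / j)
      ≤ c ^ 2 / ((n : ℝ) + 1) ^ c * (1 + 1 / (n₀ : ℝ)) ^ c * chungPhi (c - 1) n := by
  have hn₀' : (0 : ℝ) < n₀ := by positivity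
  have hn' : (0 : ℝ) < n := by exact_mod_cast (show 0 < n by omega)
  calc ∑ k ∈ Ico n₀ (n + 1), (c / k) ^ 2 * ∏ j ∈ Ico (k + 1) (n + 1), (1 - c / j)
      ≤ ∑ k ∈ Ico n₀ (n + 1), c ^ 2 / (n : ℝ) ^ c * (k : ℝ) ^ (c - 1 - 1) := by
        refine sum_le_sum fun k hk => ?_
        obtain ⟨hk₀, hkn⟩ := mem_Ico.mp hk
        have hk : (n₀ : ℝ) ≤ k := by exact_mod_cast hk₀
        have hk0 : (0 : ℝ) < k := hn₀'.trans_le hk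
        calc (c / k) ^ 2 * ∏ j ∈ Ico (k + 1) (n + 1), (1 - c / j)
            ≤ (c / k) ^ 2 * ((k : ℝ) / n) ^ c := by
              gcongr
              exact prod_Ico_succ_one_sub_div_le_div_rpow (by linarith) (by linarith)
                (by omega) (by omega)
          _ = c ^ 2 / (n : ℝ) ^ c * (k : ℝ) ^ (c - 1 - 1) := by
            rw [div_rpow hk0.le hn'.le, rpow_sub_one hk0.ne', rpow_sub_one hk0.ne']
            field_simp
    _ = c ^ 2 / (n : ℝ) ^ c * ∑ k ∈ Ico n₀ (n + 1), (k : ℝ) ^ (c - 1 - 1) := by rw [mul_sum]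
    _ ≤ c ^ 2 / (n : ℝ) ^ c * ((n : ℝ) ^ (c - 1 - 1) + chungPhi (c - 1) n) := by
        gcongr
        exact sum_Ico_rpow_le_chungPhi_of_one_le (by linarith) (by omega) (by omega)
    _ ≤ c ^ 2 / (n : ℝ) ^ c
          * (((1 + 1 / (n₀ : ℝ)) * ((n : ℝ) / (n + 1))) ^ c * chungPhi (c - 1) n) := by
        gcongr
        exact rpow_sub_one_sub_one_add_chungPhi_le hc2 hcn₀ (by exact_mod_cast hn)
    _ = _ := by
        rw [mul_rpow (by positivity) (by positivity), div_rpow hn'.le (by positivity)]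
        field_simp

end NoiseSum

theorem chung_lemma_alpha_one_general (α c τ : ℝ)
    (hc : 0 < c) (hτ : 0 < τ) (η s : ℕ → ℝ)
    (hη : ∀ n : ℕ, 1 ≤ n → η n = c * (n : ℝ) ^ (-α))
    (hs0 : ∀ n, 0 ≤ s n)
    (hrec : ∀ n : ℕ, 1 ≤ n → s (n + 1) ≤ (1 - η n) * s n + τ * η n ^ 2)
    (n₀ : ℕ) (hn₀ : 1 < n₀) (hn₀le : ∀ n, n₀ ≤ n → η n ≤ 1)
    (hαone : α = 1) :
    ∀ n : ℕ, 2 * n₀ ≤ n →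
      s (n + 1) ≤ s n₀ * ((n₀ : ℝ) / ((n : ℝ) + 1)) ^ c
        + τ * c ^ 2 / ((n : ℝ) + 1) ^ c * (1 + 1 / (n₀ : ℝ)) ^ c * chungPhi (c - 1) (n : ℝ) := by
  subst hαone
  have hη' : ∀ k : ℕ, 1 ≤ k → η k = c / k := fun k hk => by
    rw [hη k hk, rpow_neg_one, div_eq_mul_inv]
  have hcn₀ : c ≤ n₀ := by
    have h := hn₀le n₀ le_rfl
    rwa [hη' n₀ hn₀.le, div_le_one (by positivity)] at h
  intro n hn
  have hunrolled := le_mul_prod_add_sum_of_le_mul_add (r := fun k => 1 - c / k)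
    (b := fun k => τ * (c / k) ^ 2) (a := n₀)
    (fun k hk => by rw [← hη' k (by omega)]; linarith [hn₀le k hk])
    (fun k hk => by simpa only [hη' k (by omega)] using hrec k (by omega))
    (show n₀ ≤ n + 1 by omega)
  have hnoise : ∑ k ∈ Ico n₀ (n + 1), (c / k) ^ 2 * ∏ j ∈ Ico (k + 1) (n + 1), (1 - c / j)
      ≤ c ^ 2 / ((n : ℝ) + 1) ^ c * (1 + 1 / (n₀ : ℝ)) ^ c * chungPhi (c - 1) n := by
    rcases le_total c 2 with hc2 | hc2
    · exact sum_sq_mul_prod_one_sub_div_le_of_le_two hc.le hc2 hcn₀ hn₀ (by omega)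
    · exact sum_sq_mul_prod_one_sub_div_le_of_two_le hc2 hcn₀ hn₀ hn
  calc s (n + 1)
      ≤ s n₀ * ∏ j ∈ Ico n₀ (n + 1), (1 - c / j)
        + τ * ∑ k ∈ Ico n₀ (n + 1), (c / k) ^ 2 * ∏ j ∈ Ico (k + 1) (n + 1), (1 - c / j) := by
        simpa only [mul_sum, mul_assoc] using hunrolled
    _ ≤ s n₀ * ((n₀ : ℝ) / ((n + 1 : ℕ) : ℝ)) ^ c
        + τ * (c ^ 2 / ((n : ℝ) + 1) ^ c * (1 + 1 / (n₀ : ℝ)) ^ c * chungPhi (c - 1) n) := by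
      gcongr
      · exact hs0 n₀
      · exact prod_one_sub_div_le_div_rpow hc.le hcn₀ hn₀.le (by omega)
    _ = _ := by push_cast; ring

theorem chung_lemma_alpha_one (α c τ : ℝ) (hα : 0 < α) (hα1 : α ≤ 1)
    (hc : 0 < c) (hτ : 0 < τ) (η s : ℕ → ℝ)
    (hη : ∀ n : ℕ, 1 ≤ n → η n = c * (n : ℝ) ^ (-α))
    (hs0 : ∀ n, 0 ≤ s n)
    (hrec : ∀ n : ℕ, 1 ≤ n → s (n + 1) ≤ (1 - η n) * s n + τ * η n ^ 2)
    (n₀ : ℕ) (hn₀ : 1 < n₀) (hn₀le : ∀ n, n₀ ≤ n → η n ≤ 1)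
    (hn₀min : ∀ m : ℕ, 1 < m → (∀ n, m ≤ n → η n ≤ 1) → n₀ ≤ m)
    (t : ℝ) (ht : t = 1 - (2 : ℝ) ^ (α - 1))
    (hαone : α = 1) :
    ∀ n : ℕ, 2 * n₀ ≤ n →
      s (n + 1) ≤ s n₀ * ((n₀ : ℝ) / ((n : ℝ) + 1)) ^ c
        + τ * c ^ 2 / ((n : ℝ) + 1) ^ c * (1 + 1 / (n₀ : ℝ)) ^ c * chungPhi (c - 1) (n : ℝ) :=
  chung_lemma_alpha_one_general α c τ hc hτ η s hη hs0 hrec n₀ hn₀ hn₀le hαone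
end

section
/- Let H be a real Hilbert space, B : H → H β-cocoercive, w̄, w ∈ H, σ ≥ 0, α ≥ 0, and let ξ be an H-valued random variable with E[ξ] = Bw and E[‖ξ − Bw‖²] ≤ σ²(1 + α‖Bw‖²). Then E[‖ξ − Bw̄‖²] ≤ ((1 + 2σ²α)/β)⟨w − w̄, Bw − Bw̄⟩ + 2σ²(1 + 2α‖Bw̄‖²). -/
open RealInnerProductSpace MeasureTheory

theorem stochastic_estimate_second_moment_bound {H : Type*} [NormedAddCommGroup H]
    [InnerProductSpace ℝ H] [CompleteSpace H]
    {Ω : Type*} [MeasurableSpace Ω] (μ : Measure Ω) [IsProbabilityMeasure μ]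
    (B : H → H) (β : ℝ) (hβ : 0 < β)
    (hcoco : ∀ x y : H, β * ‖B x - B y‖ ^ 2 ≤ ⟪x - y, B x - B y⟫)
    (wbar w : H) (σ α : ℝ) (hσ : 0 ≤ σ) (hα : 0 ≤ α)
    (ξ : Ω → H) (hint : Integrable ξ μ)
    (hmean : ∫ ω, ξ ω ∂μ = B w)
    (hint2 : Integrable (fun ω => ‖ξ ω - B w‖ ^ 2) μ)
    (hvar : ∫ ω, ‖ξ ω - B w‖ ^ 2 ∂μ ≤ σ ^ 2 * (1 + α * ‖B w‖ ^ 2)) :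
    ∫ ω, ‖ξ ω - B wbar‖ ^ 2 ∂μ ≤
      (1 + 2 * σ ^ 2 * α) / β * ⟪w - wbar, B w - B wbar⟫
        + 2 * σ ^ 2 * (1 + 2 * α * ‖B wbar‖ ^ 2) := by
  set c : H := B w - B wbar with hc
  have key : ∀ ω, ‖ξ ω - B wbar‖ ^ 2
      = ‖ξ ω - B w‖ ^ 2 + 2 * ⟪c, ξ ω - B w⟫ + ‖c‖ ^ 2 := by
    intro ω
    have h1 : ξ ω - B wbar = (ξ ω - B w) + c := by rw [hc]; abel
    rw [h1, norm_add_sq_real, real_inner_comm]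
  have hsub : Integrable (fun ω => ξ ω - B w) μ := hint.sub (integrable_const _)
  have hI2 : Integrable (fun ω => 2 * ⟪c, ξ ω - B w⟫) μ :=
    (hsub.const_inner c).const_mul 2
  have hint_sub : ∫ ω, (ξ ω - B w) ∂μ = 0 := by
    rw [integral_sub hint (integrable_const _), hmean, integral_const]
    simp
  have hcross : ∫ ω, 2 * ⟪c, ξ ω - B w⟫ ∂μ = 0 := by
    rw [integral_const_mul, integral_inner hsub, hint_sub, inner_zero_right, mul_zero]
  have hsplit : ∫ ω, ‖ξ ω - B wbar‖ ^ 2 ∂μ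
      = (∫ ω, ‖ξ ω - B w‖ ^ 2 ∂μ) + ‖c‖ ^ 2 := by
    calc ∫ ω, ‖ξ ω - B wbar‖ ^ 2 ∂μ
        = ∫ ω, (‖ξ ω - B w‖ ^ 2 + 2 * ⟪c, ξ ω - B w⟫ + ‖c‖ ^ 2) ∂μ := by
          simp_rw [key]
      _ = (∫ ω, ‖ξ ω - B w‖ ^ 2 ∂μ) + (∫ ω, 2 * ⟪c, ξ ω - B w⟫ ∂μ)
            + ∫ ω, (‖c‖ ^ 2 : ℝ) ∂μ := by
          have hI12 : Integrable (fun ω => ‖ξ ω - B w‖ ^ 2 + 2 * ⟪c, ξ ω - B w⟫) μ :=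
            hint2.add hI2
          rw [integral_add hI12 (integrable_const _), integral_add hint2 hI2]
      _ = (∫ ω, ‖ξ ω - B w‖ ^ 2 ∂μ) + ‖c‖ ^ 2 := by
          rw [hcross, integral_const]; simp
  have hBw : ‖B w‖ ^ 2 ≤ 2 * ‖c‖ ^ 2 + 2 * ‖B wbar‖ ^ 2 := by
    have habs : ⟪c, B wbar⟫ ≤ ‖c‖ * ‖B wbar‖ := real_inner_le_norm _ _
    have h2 : B w = c + B wbar := by rw [hc]; abel
    have h3 : ‖B w‖ ^ 2 = ‖c‖ ^ 2 + 2 * ⟪c, B wbar⟫ + ‖B wbar‖ ^ 2 := by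
      rw [h2, norm_add_sq_real]
    nlinarith [sq_nonneg (‖c‖ - ‖B wbar‖)]
  have hco : β * ‖c‖ ^ 2 ≤ ⟪w - wbar, B w - B wbar⟫ := hcoco w wbar
  have hσ2 : (0:ℝ) ≤ σ ^ 2 := sq_nonneg σ
  have hcn : (0:ℝ) ≤ ‖c‖ ^ 2 := sq_nonneg _
  rw [hsplit]
  have hmain : (∫ ω, ‖ξ ω - B w‖ ^ 2 ∂μ) + ‖c‖ ^ 2
      ≤ (1 + 2 * σ ^ 2 * α) * ‖c‖ ^ 2 + 2 * σ ^ 2 * (1 + 2 * α * ‖B wbar‖ ^ 2) := by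
    have hσα : (0:ℝ) ≤ σ ^ 2 * α := mul_nonneg hσ2 hα
    nlinarith [mul_le_mul_of_nonneg_left hBw hσα,
      mul_nonneg hσα (sq_nonneg ‖B wbar‖), hvar]
  refine hmain.trans ?_
  have : (1 + 2 * σ ^ 2 * α) * ‖c‖ ^ 2 ≤ (1 + 2 * σ ^ 2 * α) / β * ⟪w - wbar, B w - B wbar⟫ := by
    have hpos : (0:ℝ) ≤ 1 + 2 * σ ^ 2 * α := by positivity
    rw [div_mul_eq_mul_div, le_div_iff₀ hβ]
    nlinarith [mul_le_mul_of_nonneg_left hco hpos]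
  linarith
end
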